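/- arXiv:2411.17918 — 13 statements merged into one kernel-verified Lean document; each statement's English description precedes it below -/
import Mathlib

section
/- Let G be a group and g ∈ G. If g^n is a generalized torsion element of G for some positive integer n, then g is a generalized torsion element of G. -/
/-! A conjugate `x⁻¹ * g ^ n * x` of `g ^ n` is the `n`-th power of the conjugate `x⁻¹ * g * x`
of `g`, so repeating each conjugator `n` times turns a trivial product of conjugates of `g ^ n`
into a trivial product of conjugates of `g`; it stays nonempty because `n > 0`. -/

/-- `g` is a generalized torsion element of `G`: some nonempty finite product of
conjugates of `g` equals the identity. -/
def IsGenTorsion {G : Type*} [Group G] (g : G) : Prop :=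
  ∃ xs : List G, xs ≠ [] ∧ (xs.map (fun x => x⁻¹ * g * x)).prod = 1

theorem List.flatMap_replicate_ne_nil {α : Type*} {xs : List α} {n : ℕ} (hxs : xs ≠ [])
    (hn : n ≠ 0) : xs.flatMap (List.replicate n) ≠ [] := by
  obtain ⟨a, t, rfl⟩ := List.exists_cons_of_ne_nil hxs
  simp [hn]

theorem inv_mul_pow_mul {G : Type*} [Group G] (x g : G) (n : ℕ) :
    x⁻¹ * g ^ n * x = (x⁻¹ * g * x) ^ n := by
  simpa using (conj_pow (a := x⁻¹) (b := g) (i := n)).symm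

theorem prod_map_conj_flatMap_replicate {G : Type*} [Group G] (g : G) (n : ℕ) (xs : List G) :
    ((xs.flatMap (List.replicate n)).map (fun x => x⁻¹ * g * x)).prod
      = (xs.map (fun x => x⁻¹ * g ^ n * x)).prod := by
  induction xs with
  | nil => rfl
  | cons a t ih =>
    rw [List.flatMap_cons, List.map_append, List.prod_append, ih, List.map_replicate,
      List.prod_replicate, List.map_cons, List.prod_cons, inv_mul_pow_mul]

theorem genTorsion_of_pow {G : Type*} [Group G] (g : G) (n : ℕ) (hn : 0 < n)
    (h : IsGenTorsion (g ^ n)) : IsGenTorsion g := by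
  obtain ⟨xs, hxs, hprod⟩ := h
  exact ⟨xs.flatMap (List.replicate n), List.flatMap_replicate_ne_nil hxs hn.ne',
    (prod_map_conj_flatMap_replicate g n xs).trans hprod⟩
end

section
/- Let G be a group with a normal subgroup N such that every nontrivial element of N is generalized torsion in N and every nontrivial element of G/N is generalized torsion in G/N. Then every element of G is generalized torsion in G. -/
lemma conj_prod_hom {G H : Type*} [Group G] [Group H] (f : G →* H) (g : G) (xs : List G) :
    f ((xs.map (fun x => x⁻¹ * g * x)).prod)
      = ((xs.map f).map (fun x => x⁻¹ * f g * x)).prod := by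
  rw [map_list_prod]
  simp only [List.map_map]
  exact congrArg List.prod (List.map_congr_left fun x _ => by simp)

lemma prod_flatMap' {M α : Type*} [Monoid M] (f : α → List M) (l : List α) :
    (l.flatMap f).prod = (l.map (fun a => (f a).prod)).prod := by
  induction l with
  | nil => simp
  | cons a t ih => simp [List.flatMap_cons, ih]

lemma conj_shift {G : Type*} [Group G] (g y : G) (xs : List G) :
    ((xs.map (· * y)).map (fun x => x⁻¹ * g * x)).prod
      = y⁻¹ * (xs.map (fun x => x⁻¹ * g * x)).prod * y := by
  induction xs with
  | nil => simp
  | cons a t ih =>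
    simp only [List.map_cons, List.prod_cons, ih, mul_inv_rev]
    group

theorem genTorsion_extension {G : Type*} [Group G] (N : Subgroup G) [N.Normal]
    (hN : ∀ x : N, x ≠ 1 → IsGenTorsion x)
    (hQ : ∀ q : G ⧸ N, q ≠ 1 → IsGenTorsion q) :
    ∀ g : G, IsGenTorsion g := by
  intro g
  by_cases hg1 : (QuotientGroup.mk g : G ⧸ N) = 1
  · -- g ∈ N
    have hgN : g ∈ N := (QuotientGroup.eq_one_iff g).mp hg1
    by_cases hg : g = 1
    · exact ⟨[1], by simp, by simp [hg]⟩
    · obtain ⟨xs, hne, hprod⟩ := hN ⟨g, hgN⟩ (by simpa [Subtype.ext_iff] using hg)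
      refine ⟨xs.map N.subtype, fun hnil => hne (List.map_eq_nil_iff.mp hnil), ?_⟩
      have := conj_prod_hom N.subtype (⟨g, hgN⟩ : N) xs
      simp only [hprod, map_one] at this
      exact this.symm
  · obtain ⟨qs, hqne, hqprod⟩ := hQ (QuotientGroup.mk g) hg1
    set xs : List G := qs.map Quotient.out with hxs
    have hmk : xs.map (QuotientGroup.mk' N) = qs := by
      rw [hxs, List.map_map]
      conv_rhs => rw [← List.map_id qs]
      exact List.map_congr_left fun q _ => QuotientGroup.out_eq' q
    set h : G := (xs.map (fun x => x⁻¹ * g * x)).prod with hh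
    have hhN : h ∈ N := by
      rw [← QuotientGroup.eq_one_iff]
      have := conj_prod_hom (QuotientGroup.mk' N) g xs
      rw [hmk] at this
      simpa [hh] using this.trans hqprod
    have hxsne : xs ≠ [] := by
      rw [hxs]; exact fun hnil => hqne (List.map_eq_nil_iff.mp hnil)
    by_cases hone : h = 1
    · exact ⟨xs, hxsne, hone⟩
    · obtain ⟨ys, hyne, hyprod⟩ := hN ⟨h, hhN⟩ (by simpa [Subtype.ext_iff] using hone)
      set zs : List G := ys.map N.subtype with hzs
      have hzprod : (zs.map (fun y => y⁻¹ * h * y)).prod = 1 := by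
        have := conj_prod_hom N.subtype (⟨h, hhN⟩ : N) ys
        simpa [hzs, hyprod] using this.symm
      refine ⟨zs.flatMap (fun y => xs.map (· * y)), ?_, ?_⟩
      · obtain ⟨z, zs', rfl⟩ := List.exists_cons_of_ne_nil hyne
        obtain ⟨x, xs', hx⟩ := List.exists_cons_of_ne_nil hxsne
        simp only [hzs, List.map_cons, List.flatMap_cons, hx, List.map_cons,
          List.cons_append]
        exact List.cons_ne_nil _ _
      · rw [List.map_flatMap, prod_flatMap']
        have : (zs.map fun y => ((xs.map (· * y)).map (fun x => x⁻¹ * g * x)).prod)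
            = zs.map (fun y => y⁻¹ * h * y) := by
          refine List.map_congr_left fun y _ => ?_
          rw [conj_shift, ← hh]
        rw [this, hzprod]
end

section
/- Let G be a group with a normal subgroup N. If N has generalized exponent at most n (that is, 1 ∈ Cⁿ for every N-conjugacy class C of N) and G/N has generalized exponent at most q, then G has generalized exponent at most nq. -/
theorem genExponent_extension {G : Type*} [Group G] (N : Subgroup G) [N.Normal]
    (n q : ℕ) (hn : 0 < n) (hq : 0 < q)
    (hN : ∀ a : N, ∃ xs : List N, xs.length = n ∧
      (xs.map (fun x => x⁻¹ * a * x)).prod = 1)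
    (hQ : ∀ b : G ⧸ N, ∃ xs : List (G ⧸ N), xs.length = q ∧
      (xs.map (fun x => x⁻¹ * b * x)).prod = 1) :
    ∀ g : G, ∃ xs : List G, xs.length = n * q ∧
      (xs.map (fun x => x⁻¹ * g * x)).prod = 1 := by
  intro g
  obtain ⟨xsQ, hlenQ, hprodQ⟩ := hQ ((g : G) : G ⧸ N)
  obtain ⟨ys, hys⟩ : ∃ ys : List G, ys.map (QuotientGroup.mk (s := N)) = xsQ :=
    ⟨xsQ.map Quotient.out, by
      rw [List.map_map]
      simp only [Function.comp_def]
      exact (List.map_congr_left (fun x _ => Quotient.out_eq x)).trans (List.map_id xsQ)⟩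
  have hlenys : ys.length = q := by
    have := congrArg List.length hys; simpa using this.trans hlenQ
  set a : G := (ys.map (fun y => y⁻¹ * g * y)).prod with ha
  have haN : a ∈ N := by
    have h1 : ((a : G) : G ⧸ N) = 1 := by
      show (QuotientGroup.mk' N) a = 1
      rw [ha, map_list_prod (QuotientGroup.mk' N), List.map_map]
      have hc : (⇑(QuotientGroup.mk' N) ∘ fun y => y⁻¹ * g * y)
          = (fun x : G ⧸ N => x⁻¹ * (g : G ⧸ N) * x) ∘ (QuotientGroup.mk (s := N)) := by
        funext y; simp
      rw [hc, ← List.map_map, hys, hprodQ]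
    exact (QuotientGroup.eq_one_iff a).mp h1
  obtain ⟨zs, hlenzs, hprodzs⟩ := hN ⟨a, haN⟩
  have hprodzsG : (zs.map (fun z : N => (z : G)⁻¹ * a * z)).prod = 1 := by
    have := congrArg (N.subtype) hprodzs
    rw [map_list_prod, List.map_map] at this
    simpa using this
  have key : ∀ z : G, ((ys.map (fun y => y * z)).map (fun x => x⁻¹ * g * x)).prod
      = z⁻¹ * a * z := by
    intro z
    rw [List.map_map]
    have h2 : ((fun x => x⁻¹ * g * x) ∘ fun y => y * z)
        = (⇑(MulAut.conj z⁻¹).toMonoidHom) ∘ (fun y => y⁻¹ * g * y) := by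
      funext y; simp [MulAut.conj_apply]; group
    rw [h2, ← List.map_map, ← map_list_prod (MulAut.conj z⁻¹).toMonoidHom, ← ha]
    simp [MulAut.conj_apply]
  refine ⟨(zs.map (fun z : N => ys.map (fun y => y * (z : G)))).flatten, ?_, ?_⟩
  · rw [List.length_flatten, List.map_map]
    have hc : (List.length ∘ fun z : N => ys.map (fun y => y * (z : G))) = fun _ => q := by
      funext z; simp [hlenys]
    rw [hc]
    have : (zs.map (fun _ : N => q)).sum = zs.length * q := by
      induction zs with
      | nil => simp
      | cons hd tl ih => simp [ih, Nat.succ_mul, Nat.add_comm]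
    rw [this, hlenzs]
  · simp only [List.map_flatten, List.prod_flatten, List.map_map, Function.comp_def]
    have h5 : (zs.map fun z : N =>
        ((ys.map (fun y => y * (z : G))).map (fun x => x⁻¹ * g * x)).prod)
        = zs.map (fun z : N => (z : G)⁻¹ * a * z) := by
      refine List.map_congr_left (fun z _ => key (z : G))
    simp only [List.map_map, Function.comp_def] at h5
    rw [h5]
    exact hprodzsG
end

section
/- Let G be a group and N ≤ Z(G) a central subgroup such that G/N has exponent n (i.e., (gN)ⁿ = 1 for all g ∈ G). Then every commutator [x,y] = x⁻¹y⁻¹xy in G is a generalized torsion element of G. -/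
theorem commutator_genTorsion_of_central_quotient_exponent {G : Type*} [Group G]
    (N : Subgroup G) (hN : N ≤ Subgroup.center G) (n : ℕ) (hn : 0 < n)
    (hexp : ∀ g : G, g ^ n ∈ N) :
    ∀ x y : G, IsGenTorsion (x⁻¹ * y⁻¹ * x * y) := by
  intro x y
  set c := x⁻¹ * y⁻¹ * x * y with hc
  refine ⟨(List.range n).reverse.map (fun k => x ^ k), ?_, ?_⟩
  · simp [List.range_eq_nil, hn.ne']
  · have key : ∀ m : ℕ,
        (((List.range m).reverse.map (fun k => x ^ k)).map
          (fun z => z⁻¹ * c * z)).prod = (x ^ m)⁻¹ * y⁻¹ * (x ^ m) * y := by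
      intro m
      induction m with
      | zero => simp
      | succ m ih =>
        rw [List.range_succ, List.reverse_append]
        simp only [List.reverse_singleton, List.singleton_append, List.map_cons,
          List.prod_cons, ih]
        rw [hc, pow_succ]
        group
    rw [key n]
    have hcen : x ^ n ∈ Subgroup.center G := hN (hexp x)
    have := (Subgroup.mem_center_iff.mp hcen) y⁻¹
    rw [mul_assoc (x ^ n)⁻¹, this]
    group
end

section
/- Let G be a group, A ≤ G a torsion-free abelian subgroup of finite index n, and z a nontrivial element of Z(G) ∩ A. Then the image of z in the abelianization G^{ab} = G/[G,G] has infinite order. -/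
/-! The transfer `τ : G →* A` to the abelian subgroup `A` factors through `G^{ab}` and sends a
central element `z` to `z ^ [G : A]`. So if the image of `z` in `G^{ab}` had finite order, then so
would `z ^ [G : A]`, hence `z`, in the torsion-free group `A`. -/

open Subgroup MonoidHom

open scoped IsMulCommutative

section Transfer

variable {G : Type*} [Group G] (H : Subgroup G) [H.FiniteIndex] [IsMulCommutative H]

theorem transfer_id_eq_pow_index_of_mem_center {g : G} (hg : g ∈ center G) :
    ((MonoidHom.id H).transfer g : G) = g ^ H.index := by
  rw [transfer_eq_pow (MonoidHom.id H) g fun k g₀ _ => by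
    rw [mul_assoc, ← mem_center_iff.mp (pow_mem hg k) g₀, inv_mul_cancel_left]]
  rfl

theorem isOfFinOrder_pow_index_of_isOfFinOrder_abelianization_of {g : G} (hg : g ∈ center G)
    (h : IsOfFinOrder (Abelianization.of g)) : IsOfFinOrder (g ^ H.index) := by
  have := H.subtype.isOfFinOrder ((Abelianization.lift (MonoidHom.id H).transfer).isOfFinOrder h)
  rwa [Abelianization.lift_apply_of, coe_subtype,
    transfer_id_eq_pow_index_of_mem_center H hg] at this

end Transfer

theorem infinite_order_in_abelianization {G : Type*} [Group G] (A : Subgroup G)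
    (hfin : A.index ≠ 0)
    (hab : ∀ a b : G, a ∈ A → b ∈ A → a * b = b * a)
    (htf : ∀ a : G, a ∈ A → IsOfFinOrder a → a = 1)
    (z : G) (hz : z ∈ Subgroup.center G) (hzA : z ∈ A) (hz1 : z ≠ 1) :
    ¬ IsOfFinOrder (Abelianization.of z) := by
  have : A.FiniteIndex := ⟨hfin⟩
  have : IsMulCommutative A := ⟨⟨fun a b => Subtype.ext (hab a b a.2 b.2)⟩⟩
  intro hfo
  have hpow := isOfFinOrder_pow_index_of_isOfFinOrder_abelianization_of A hz hfo
  exact hz1 (htf z hzA (hpow.of_pow hfin))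
end

section
/- Let G be a finitely generated group with a free abelian normal subgroup A of finite index, and let π : G → G^{ab} be the abelianization map. Then an element g ∈ G is generalized torsion if and only if π(g) has finite order in G^{ab}. -/
section

open MulAction Subgroup

variable {G : Type*} [Group G]

theorem Abelianization.of_list_prod_map_conj (g : G) (xs : List G) :
    of (xs.map (fun x => x⁻¹ * g * x)).prod = of g ^ xs.length := by
  induction xs with
  | nil => simp
  | cons a l ih => simp [ih, pow_succ', inv_mul_cancel_comm]

theorem IsGenTorsion.isOfFinOrder_abelianization_of {g : G} (hg : IsGenTorsion g) :
    IsOfFinOrder (Abelianization.of g) := by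
  obtain ⟨xs, hne, hprod⟩ := hg
  refine isOfFinOrder_iff_pow_eq_one.mpr ⟨xs.length, List.length_pos_iff_ne_nil.mpr hne, ?_⟩
  rw [← Abelianization.of_list_prod_map_conj, hprod, map_one]

-- One block `r⁻¹ g^k r = (r⁻¹ g r)^k` for each `⟨g⟩`-orbit on `G ⧸ H`, of length `k` and
-- with representative `r H`; the lengths add up to the index.
theorem MonoidHom.exists_transfer_eq_list_prod_map_conj {C : Type*} [CommGroup C]
    (H : Subgroup G) [H.FiniteIndex] (ϕ : H →* C) (g : G) :
    ∃ xs : List G, xs.length = H.index ∧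
      ∃ h : (xs.map (fun x => x⁻¹ * g * x)).prod ∈ H, ϕ.transfer g = ϕ ⟨_, h⟩ := by
  classical
  let := H.fintypeQuotientOfFiniteIndex
  let k : Quotient (orbitRel (zpowers g) (G ⧸ H)) → ℕ := fun q =>
    Function.minimalPeriod (g • ·) q.out
  let xs : List G := Finset.univ.toList.flatMap fun q => List.replicate (k q) q.out.out
  have hblock : ∀ q, ((List.replicate (k q) q.out.out).map fun x => x⁻¹ * g * x).prod =
      q.out.out⁻¹ * g ^ k q * q.out.out := by
    intro q
    rw [List.map_replicate, List.prod_replicate]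
    simpa using conj_pow (a := q.out.out⁻¹) (b := g) (i := k q)
  let y : H := (Finset.univ.toList.map fun q =>
    ⟨q.out.out⁻¹ * g ^ k q * q.out.out, QuotientGroup.out_conj_pow_minimalPeriod_mem H g q.out⟩).prod
  have hy : (xs.map fun x => x⁻¹ * g * x).prod = y := by
    simp only [y, xs, Subgroup.val_list_prod, List.flatMap_def, List.map_flatten, List.prod_flatten,
      List.map_map]
    exact congrArg List.prod (List.map_congr_left fun q _ => hblock q)
  refine ⟨xs, by simp [xs, k, index_eq_sum_minimalPeriod H g], hy ▸ y.2, ?_⟩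
  rw [transfer_eq_prod_quotient_orbitRel_zpowers_quot, ← Finset.prod_map_toList,
    ← Function.comp_def ϕ, List.prod_map_hom]
  exact congrArg ϕ (Subtype.ext hy.symm)

theorem isGenTorsion_of_isOfFinOrder_abelianization_of {C : Type*} [CommGroup C]
    [IsMulTorsionFree C] {H : Subgroup G} [H.FiniteIndex] {ϕ : H →* C}
    (hϕ : Function.Injective ϕ) {g : G} (hg : IsOfFinOrder (Abelianization.of g)) :
    IsGenTorsion g := by
  obtain ⟨xs, hlen, hmem, htransfer⟩ := ϕ.exists_transfer_eq_list_prod_map_conj H g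
  have htrivial : ϕ.transfer g = 1 :=
    ((Abelianization.lift ϕ.transfer).isOfFinOrder hg).eq_one'
  refine ⟨xs, ?_, ?_⟩
  · rw [← List.length_pos_iff_ne_nil, hlen]
    exact Nat.pos_of_ne_zero FiniteIndex.index_ne_zero
  · rw [htransfer, ← map_one ϕ] at htrivial
    exact congrArg Subtype.val (hϕ htrivial)

end

theorem genTorsion_iff_torsion_abelianization_general {G : Type*} [Group G]
    (A : Subgroup G) [A.Normal] (hfin : A.index ≠ 0)
    (hfree : ∃ n : ℕ, Nonempty (A ≃* Multiplicative (Fin n → ℤ)))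
    (g : G) :
    IsGenTorsion g ↔ IsOfFinOrder (Abelianization.of g) := by
  obtain ⟨n, ⟨e⟩⟩ := hfree
  have : A.FiniteIndex := ⟨hfin⟩
  exact ⟨IsGenTorsion.isOfFinOrder_abelianization_of,
    isGenTorsion_of_isOfFinOrder_abelianization_of (ϕ := e.toMonoidHom) e.injective⟩

theorem genTorsion_iff_torsion_abelianization {G : Type*} [Group G] [Group.FG G]
    (A : Subgroup G) [A.Normal] (hfin : A.index ≠ 0)
    (hfree : ∃ n : ℕ, Nonempty (A ≃* Multiplicative (Fin n → ℤ)))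
    (g : G) :
    IsGenTorsion g ↔ IsOfFinOrder (Abelianization.of g) :=
  genTorsion_iff_torsion_abelianization_general A hfin hfree g
end

section
/- Let G be a finitely generated group with a free abelian normal subgroup A of finite index. Then the set of generalized torsion elements of G is a normal subgroup of G. -/
/-!
All conjugates of `g` have the same image in `G^{ab}`, so generalized torsion elements map to
torsion elements. Conversely, let `g` map to a torsion element and let `a = g ^ m ∈ A`, where
`m` is the index of `A`. For `a ∈ A` the transfer `V : G → A` is the product of the conjugates
`t⁻¹ a t` over coset representatives `t`. As `V` factors through `G^{ab}`, `V a` is torsion,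
hence trivial because `A` is torsion-free: a product of conjugates of `a` is `1`. Writing each
conjugate of `g ^ m` as `m` conjugates of `g` shows that `g` is generalized torsion. Thus the
generalized torsion elements are the preimage of the torsion subgroup of `G^{ab}`.
-/

section
variable {G : Type*} [Group G]

theorem IsGenTorsion.of_pow {g : G} {m : ℕ} (hm : m ≠ 0) (h : IsGenTorsion (g ^ m)) :
    IsGenTorsion g := by
  obtain ⟨xs, hne, hprod⟩ := h
  have conj_pow' (x : G) : (x⁻¹ * g * x) ^ m = x⁻¹ * g ^ m * x := by
    simpa using conj_pow (a := x⁻¹) (b := g) (i := m)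
  refine ⟨xs.flatMap (List.replicate m), ?_, ?_⟩
  · simpa [List.flatMap_eq_nil_iff, hm, List.eq_nil_iff_forall_not_mem] using hne
  · rw [← hprod]
    clear hne hprod
    induction xs with
    | nil => rfl
    | cons x xs ih => simp [ih, List.prod_replicate, conj_pow']

theorem IsGenTorsion.isOfFinOrder_of {g : G} (h : IsGenTorsion g) :
    IsOfFinOrder (Abelianization.of g) := by
  obtain ⟨xs, hne, hprod⟩ := h
  refine isOfFinOrder_iff_pow_eq_one.mpr ⟨xs.length, List.length_pos_iff.mpr hne, ?_⟩
  have := congrArg Abelianization.of hprod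
  simpa [map_list_prod, Function.comp_def, List.prod_replicate] using this

theorem MonoidHom.transfer_eq_one_of_isOfFinOrder {H : Subgroup G} [H.FiniteIndex]
    {A : Type*} [CommGroup A] [IsMulTorsionFree A] (ϕ : H →* A) {g : G}
    (hg : IsOfFinOrder (Abelianization.of g)) : ϕ.transfer g = 1 := by
  rw [← Abelianization.lift_apply_of ϕ.transfer g]
  exact ((Abelianization.lift ϕ.transfer).isOfFinOrder hg).eq_one'

theorem MonoidHom.transfer_eq_prod_conj_of_mem {N : Subgroup G} [hN : N.Normal] [N.FiniteIndex]
    {A : Type*} [CommGroup A] (ϕ : N →* A) [Fintype (G ⧸ N)] {a : G} (ha : a ∈ N) :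
    ϕ.transfer a = ∏ q : G ⧸ N, ϕ ⟨q.out⁻¹ * a * q.out, hN.conj_mem' a ha q.out⟩ := by
  have hT (q : G ⧸ N) : ((default : N.LeftTransversal).2.leftQuotientEquiv q : G) = q.out :=
    Subgroup.IsComplement.leftQuotientEquiv_apply Quotient.out_eq' q
  have hfix (q : G ⧸ N) : a⁻¹ • q = q := by
    induction q using QuotientGroup.induction_on with
    | H g =>
      rw [MulAction.Quotient.smul_mk, QuotientGroup.eq, smul_eq_mul, mul_inv_rev, inv_inv]
      exact hN.conj_mem' a ha g
  rw [ϕ.transfer_def default, Subgroup.leftTransversals.diff]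
  refine Finset.prod_congr (by congr; exact Subsingleton.elim _ _) fun q _ => ?_
  congr 2
  rw [Subgroup.smul_apply_eq_smul_apply_inv_smul, hfix, hT, smul_eq_mul, mul_assoc]

theorem isGenTorsion_of_mem_of_isOfFinOrder {N : Subgroup G} [hN : N.Normal] [N.FiniteIndex]
    {A : Type*} [CommGroup A] [IsMulTorsionFree A] {ϕ : N →* A} (hϕ : Function.Injective ϕ)
    {a : G} (ha : a ∈ N) (hfin : IsOfFinOrder (Abelianization.of a)) : IsGenTorsion a := by
  let := N.fintypeQuotientOfFiniteIndex
  let qs := (Finset.univ : Finset (G ⧸ N)).toList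
  let conjs : List N := qs.map fun q => ⟨q.out⁻¹ * a * q.out, hN.conj_mem' a ha q.out⟩
  have hϕ_prod : ϕ conjs.prod = 1 := by
    rw [map_list_prod, List.map_map, Function.comp_def, Finset.prod_map_toList,
      ← ϕ.transfer_eq_prod_conj_of_mem ha, ϕ.transfer_eq_one_of_isOfFinOrder hfin]
  have h_prod : conjs.prod = 1 := hϕ (by rw [hϕ_prod, map_one])
  refine ⟨qs.map (·.out), by simpa [qs] using Finset.univ_nonempty.ne_empty, ?_⟩
  calc ((qs.map (·.out)).map fun x => x⁻¹ * a * x).prod = (conjs.prod : G) := by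
        simp [conjs, Function.comp_def]
    _ = 1 := by rw [h_prod, Subgroup.coe_one]

theorem isGenTorsion_iff_isOfFinOrder_of {N : Subgroup G} [N.Normal] [N.FiniteIndex]
    {A : Type*} [CommGroup A] [IsMulTorsionFree A] {ϕ : N →* A} (hϕ : Function.Injective ϕ)
    {g : G} : IsGenTorsion g ↔ IsOfFinOrder (Abelianization.of g) :=
  ⟨IsGenTorsion.isOfFinOrder_of, fun h => .of_pow Subgroup.FiniteIndex.index_ne_zero <|
    isGenTorsion_of_mem_of_isOfFinOrder hϕ (N.pow_index_mem g) (by rw [map_pow]; exact h.pow)⟩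

end

theorem genTorsion_is_normal_subgroup_general {G : Type*} [Group G]
    (A : Subgroup G) [A.Normal] (hfin : A.index ≠ 0)
    (hfree : ∃ n : ℕ, Nonempty (A ≃* Multiplicative (Fin n → ℤ))) :
    ∃ H : Subgroup G, H.Normal ∧ ∀ g : G, g ∈ H ↔ IsGenTorsion g := by
  obtain ⟨n, ⟨e⟩⟩ := hfree
  have : A.FiniteIndex := ⟨hfin⟩
  refine ⟨(CommGroup.torsion (Abelianization G)).comap Abelianization.of, inferInstance,
    fun g => ?_⟩
  rw [Subgroup.mem_comap, CommGroup.mem_torsion,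
    isGenTorsion_iff_isOfFinOrder_of (ϕ := e.toMonoidHom) e.injective]

theorem genTorsion_is_normal_subgroup {G : Type*} [Group G] [Group.FG G]
    (A : Subgroup G) [A.Normal] (hfin : A.index ≠ 0)
    (hfree : ∃ n : ℕ, Nonempty (A ≃* Multiplicative (Fin n → ℤ))) :
    ∃ H : Subgroup G, H.Normal ∧ ∀ g : G, g ∈ H ↔ IsGenTorsion g :=
  genTorsion_is_normal_subgroup_general A hfin hfree
end

section
/- Let G be a finitely generated torsion-free group with a free abelian normal subgroup A of finite index. Then every element of G is generalized torsion if and only if the center of G is trivial. -/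
/-!
A central generalized torsion element is a torsion element, which settles one direction.
Conversely, let `A` be an abelian normal subgroup of finite index `n`. Since `A` is abelian,
conjugation on `A` factors through `G ⧸ A`, so the norm `N(a) = ∏_{q ∈ G ⧸ A} q⁻¹ a q` is a
well-defined element of `A` fixed by every conjugation, i.e. central. If the centre is trivial,
then `N(gⁿ) = 1` for every `g`, and `N(gⁿ)` is a product of `n²` conjugates of `g`.
-/

open scoped IsMulCommutative

theorem IsMulCommutative.of_mulEquiv {M N : Type*} [Mul M] [CommMagma N] (e : M ≃* N) :
    IsMulCommutative M :=
  ⟨⟨fun a b => e.injective (by rw [map_mul, map_mul, mul_comm])⟩⟩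

namespace IsGenTorsion

variable {G : Type*} [Group G] {g : G}

theorem of_pow_s13 {n : ℕ} (hn : n ≠ 0) (h : IsGenTorsion (g ^ n)) : IsGenTorsion g := by
  obtain ⟨xs, hne, hprod⟩ := h
  have hpow (x : G) : (x⁻¹ * g * x) ^ n = x⁻¹ * g ^ n * x := by
    simpa using conj_pow (a := x⁻¹) (b := g) (i := n)
  refine ⟨xs.flatMap (List.replicate n), ?_, ?_⟩
  · simpa [List.flatMap_eq_nil_iff] using ⟨List.exists_mem_of_ne_nil xs hne, hn⟩
  · rw [List.flatMap, List.map_flatten, List.prod_flatten, List.map_map, List.map_map]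
    simpa [Function.comp_def, hpow] using hprod

theorem isOfFinOrder_of_mem_center (hg : g ∈ Subgroup.center G) (h : IsGenTorsion g) :
    IsOfFinOrder g := by
  obtain ⟨xs, hne, hprod⟩ := h
  have hconj (x : G) : x⁻¹ * g * x = g := by
    rw [mul_assoc, ← Subgroup.mem_center_iff.mp hg x, inv_mul_cancel_left]
  rw [List.map_congr_left (fun x _ => hconj x), List.map_const', List.prod_replicate] at hprod
  exact isOfFinOrder_iff_pow_eq_one.mpr ⟨_, List.length_pos_iff.mpr hne, hprod⟩

end IsGenTorsion

namespace Subgroup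

variable {G : Type*} [Group G] (A : Subgroup G) [A.Normal] [IsMulCommutative A]

theorem conjNormal_coe_eq_one (k : A) : MulAut.conjNormal (H := A) k = 1 := by
  ext a
  simp [setLike_mul_comm k.2 a.2]

variable {A} in
theorem conjNormal_out_mk_inv (x : G) (a : A) :
    MulAut.conjNormal (QuotientGroup.mk x : G ⧸ A).out⁻¹ a = MulAut.conjNormal x⁻¹ a := by
  obtain ⟨k, hk⟩ := QuotientGroup.mk_out_eq_mul A x
  rw [hk, mul_inv_rev, map_mul, ← coe_inv, conjNormal_coe_eq_one, one_mul]

variable [Fintype (G ⧸ A)]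

noncomputable def conjNorm (a : A) : A := ∏ q : G ⧸ A, MulAut.conjNormal q.out⁻¹ a

theorem conjNormal_conjNorm (h : G) (a : A) :
    MulAut.conjNormal h (A.conjNorm a) = A.conjNorm a := by
  rw [conjNorm, map_prod]
  refine Fintype.prod_equiv (Equiv.mulRight (QuotientGroup.mk h⁻¹ : G ⧸ A)) _ _ fun q => ?_
  obtain ⟨x, rfl⟩ := QuotientGroup.mk_surjective q
  simp only [Equiv.coe_mulRight, ← QuotientGroup.mk_mul, conjNormal_out_mk_inv]
  rw [mul_inv_rev, inv_inv, map_mul, MulAut.mul_apply]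

theorem conjNorm_mem_center (a : A) : (A.conjNorm a : G) ∈ center G := by
  refine mem_center_iff.mpr fun h => ?_
  rw [← mul_inv_eq_iff_eq_mul, ← MulAut.conjNormal_apply, conjNormal_conjNorm]

theorem coe_conjNorm (a : A) :
    (A.conjNorm a : G) =
      ((Finset.univ.toList.map fun q : G ⧸ A => q.out).map fun x => x⁻¹ * (a : G) * x).prod := by
  rw [conjNorm, ← Finset.prod_map_toList, val_list_prod]
  simp [Function.comp_def]

theorem isGenTorsion_of_conjNorm_eq_one {a : A} (h : A.conjNorm a = 1) :
    IsGenTorsion (a : G) :=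
  ⟨Finset.univ.toList.map fun q : G ⧸ A => q.out, by simp [Finset.univ_eq_empty_iff],
    by rw [← coe_conjNorm, h, coe_one]⟩

end Subgroup

theorem isGenTorsion_of_center_eq_bot {G : Type*} [Group G] (A : Subgroup G) [A.Normal]
    [IsMulCommutative A] [A.FiniteIndex] (hZ : Subgroup.center G = ⊥) (g : G) :
    IsGenTorsion g := by
  have := A.fintypeQuotientOfFiniteIndex
  let a : A := ⟨g ^ A.index, A.pow_index_mem g⟩
  have ha : A.conjNorm a = 1 := Subtype.ext <| by
    simpa [hZ] using A.conjNorm_mem_center a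
  exact (A.isGenTorsion_of_conjNorm_eq_one ha).of_pow_s13 Subgroup.FiniteIndex.index_ne_zero

theorem genTorsion_all_iff_center_trivial_general {G : Type*} [Group G]
    (A : Subgroup G) [A.Normal] (hfin : A.index ≠ 0)
    (hfree : ∃ n : ℕ, Nonempty (A ≃* Multiplicative (Fin n → ℤ)))
    (htf : ∀ g : G, IsOfFinOrder g → g = 1) :
    (∀ g : G, IsGenTorsion g) ↔ Subgroup.center G = ⊥ := by
  obtain ⟨n, ⟨e⟩⟩ := hfree
  have : IsMulCommutative A := .of_mulEquiv e
  have : A.FiniteIndex := ⟨hfin⟩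
  refine ⟨fun hall => ?_, isGenTorsion_of_center_eq_bot A⟩
  exact (Subgroup.eq_bot_iff_forall _).mpr fun z hz =>
    htf z ((hall z).isOfFinOrder_of_mem_center hz)

theorem genTorsion_all_iff_center_trivial {G : Type*} [Group G] [Group.FG G]
    (A : Subgroup G) [A.Normal] (hfin : A.index ≠ 0)
    (hfree : ∃ n : ℕ, Nonempty (A ≃* Multiplicative (Fin n → ℤ)))
    (htf : ∀ g : G, IsOfFinOrder g → g = 1) :
    (∀ g : G, IsGenTorsion g) ↔ Subgroup.center G = ⊥ :=
  genTorsion_all_iff_center_trivial_general A hfin hfree htf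
end

section
/- Let G be a group with a torsion-free abelian normal subgroup A of finite index m such that G^{ab} is finite. Then for every g ∈ G there exist x₁,...,x_m ∈ G with g^{x₁} g^{x₂} ⋯ g^{x_m} = 1; that is, G has generalized exponent at most |G/A|. -/
open MulAction Subgroup Function

private theorem list_prod_flatMap {α M : Type*} [Monoid M] (l : List α) (f : α → List M) :
    (l.flatMap f).prod = (l.map (fun a => (f a).prod)).prod := by
  induction l with
  | nil => simp
  | cons a l ih => simp [List.flatMap_cons, ih]

private theorem conj_pow' {G : Type*} [Group G] (x g : G) (n : ℕ) :
    (x⁻¹ * g * x) ^ n = x⁻¹ * g ^ n * x := by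
  induction n with
  | zero => simp
  | succ n ih => rw [pow_succ, pow_succ, ih]; group

theorem genExponent_le_index {G : Type*} [Group G]
    (A : Subgroup G) [A.Normal] (m : ℕ) (hm : A.index = m) (hm0 : m ≠ 0)
    (hab : ∀ a b : G, a ∈ A → b ∈ A → a * b = b * a)
    (htf : ∀ a : G, a ∈ A → IsOfFinOrder a → a = 1)
    (habfin : Finite (Abelianization G)) :
    ∀ g : G, ∃ xs : List G, xs.length = m ∧
      (xs.map (fun x => x⁻¹ * g * x)).prod = 1 := by
  classical
  letI : CommGroup A :=
    { (inferInstance : Group A) with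
      mul_comm := fun a b => Subtype.ext (hab a b a.2 b.2) }
  haveI hfi : A.FiniteIndex := ⟨hm ▸ hm0⟩
  letI := A.fintypeQuotientOfFiniteIndex
  intro g
  letI : Fintype (Quotient (orbitRel (zpowers g) (G ⧸ A))) := Fintype.ofFinite _
  set d : Quotient (orbitRel (zpowers g) (G ⧸ A)) → ℕ :=
    fun q => Function.minimalPeriod (g • ·) q.out with hd
  set t : Quotient (orbitRel (zpowers g) (G ⧸ A)) → G := fun q => q.out.out with ht
  set F : Quotient (orbitRel (zpowers g) (G ⧸ A)) → A := fun q =>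
    ⟨(t q)⁻¹ * g ^ d q * t q,
      QuotientGroup.out_conj_pow_minimalPeriod_mem A g q.out⟩ with hF
  -- the transfer homomorphism to A vanishes on g
  have h2 : ((MonoidHom.transfer (MonoidHom.id A)) g : G) = 1 := by
    have hfin : IsOfFinOrder ((MonoidHom.transfer (MonoidHom.id A)) g) := by
      have key : (MonoidHom.transfer (MonoidHom.id A)) g
          = (Abelianization.lift (MonoidHom.transfer (MonoidHom.id A)))
              (Abelianization.of g) := by simp
      rw [key]
      exact (Abelianization.lift _).isOfFinOrder (isOfFinOrder_of_finite _)
    exact htf _ ((MonoidHom.transfer (MonoidHom.id A)) g).2 (A.subtype.isOfFinOrder hfin)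
  -- the transfer computed as a product over orbits
  have h1 : (MonoidHom.transfer (MonoidHom.id A)) g = ∏ q, F q :=
    MonoidHom.transfer_eq_prod_quotient_orbitRel_zpowers_quot (MonoidHom.id A) g
  -- sum of minimal periods equals the index
  have h3 : ∑ q, d q = m := by
    rw [← hm, index_eq_card, Nat.card_eq_fintype_card,
      Fintype.card_congr (selfEquivSigmaOrbits (zpowers g) (G ⧸ A)), Fintype.card_sigma]
    refine Finset.sum_congr rfl fun q _ => ?_
    rw [hd]
    exact (minimalPeriod_eq_card g q.out).trans (Fintype.card_congr (Equiv.refl _))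
  refine ⟨(Finset.univ.toList).flatMap (fun q => List.replicate (d q) (t q)), ?_, ?_⟩
  · simpa [List.length_flatMap, Function.comp_def, Finset.sum_map_toList] using h3
  · have step1 : ((Finset.univ.toList.flatMap
          (fun q => List.replicate (d q) (t q))).map (fun x => x⁻¹ * g * x)).prod
        = (Finset.univ.toList.map (fun q => ((t q)⁻¹ * g * t q) ^ d q)).prod := by
      rw [List.map_flatMap, list_prod_flatMap]
      simp
    have step2 : (Finset.univ.toList.map (fun q => ((t q)⁻¹ * g * t q) ^ d q)).prod
        = (Finset.univ.toList.map (fun q => ((F q : A) : G))).prod := by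
      refine congrArg _ (List.map_congr_left fun q _ => ?_)
      exact conj_pow' (t q) g (d q)
    have h4 : ((∏ q, F q : A) : G)
        = (Finset.univ.toList.map (fun q => ((F q : A) : G))).prod := by
      rw [← Finset.prod_map_toList, Subgroup.val_list_prod, List.map_map]
      rfl
    rw [step1, step2, ← h4, ← h1, h2]
end

section
/- Let G be a group with a torsion-free abelian normal subgroup A of finite index such that G^{ab} is finite. Set k = exp(G/A) and let x₁,...,x_m be a transversal of A in G. Then for all g ∈ G, (g^k)^{x₁} (g^k)^{x₂} ⋯ (g^k)^{x_m} = 1. In particular G satisfies a positive generalized identity of degree k·m with fixed conjugating elements. -/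
/-!
The transfer `V : G →* A` to the abelian subgroup `A` is a homomorphism from a group with finite
abelianization to a torsion-free abelian group, hence trivial. Since `A` is normal, each element
of `A` fixes every coset of `A`, so for `a ∈ A` the transfer is the product of the conjugates
`x⁻¹ * a * x` over a transversal. Applying this to `a = g ^ k ∈ A` gives the identity, and
repeating each conjugating element `k` times gives the identity of degree `k * m`.
-/

theorem List.prod_map_comp_eq_prod_univ {α β M : Type*} [CommMonoid M] [Fintype β]
    (π : α → β) (F : β → M) {xs : List α} (hnodup : (xs.map π).Nodup)
    (hcover : ∀ b, b ∈ xs.map π) :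
    (xs.map (F ∘ π)).prod = ∏ b, F b := by
  classical
  rw [← List.map_map, ← List.prod_toFinset _ hnodup]
  congr
  exact Finset.eq_univ_iff_forall.mpr fun b => List.mem_toFinset.mpr (hcover b)

namespace MonoidHom

open Subgroup Subgroup.leftTransversals

variable {G A : Type*} [Group G] [CommGroup A] {H : Subgroup G} [hH : H.Normal] (ϕ : H →* A)

theorem map_conj_eq_of_mk_eq {h : G} (hh : h ∈ H) {x y : G} (hxy : (x : G ⧸ H) = y) :
    ϕ ⟨x⁻¹ * h * x, hH.conj_mem' h hh x⟩ = ϕ ⟨y⁻¹ * h * y, hH.conj_mem' h hh y⟩ := by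
  obtain ⟨b, hb⟩ : ∃ b : H, y = x * b :=
    ⟨⟨x⁻¹ * y, QuotientGroup.eq.mp hxy⟩, by simp⟩
  have : (⟨y⁻¹ * h * y, hH.conj_mem' h hh y⟩ : H) =
      b⁻¹ * ⟨x⁻¹ * h * x, hH.conj_mem' h hh x⟩ * b := Subtype.ext (by simp [hb, mul_assoc])
  rw [this, map_mul, map_mul, map_inv, mul_comm, mul_inv_cancel_left]

theorem transfer_eq_list_prod_conj [H.FiniteIndex] {xs : List G}
    (hnodup : (xs.map (QuotientGroup.mk (s := H))).Nodup)
    (hcover : ∀ q : G ⧸ H, q ∈ xs.map (QuotientGroup.mk (s := H))) {h : G} (hh : h ∈ H) :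
    transfer ϕ h = (xs.map fun x => ϕ ⟨x⁻¹ * h * x, hH.conj_mem' h hh x⟩).prod := by
  let := H.fintypeQuotientOfFiniteIndex
  let T : H.LeftTransversal := default
  let t (q : G ⧸ H) : G := T.2.leftQuotientEquiv q
  have ht (q : G ⧸ H) : ((h • T).2.leftQuotientEquiv q : G) = h * t q := by
    have hq : h⁻¹ • q = q := by
      induction q using QuotientGroup.induction_on with
      | H y => exact QuotientGroup.eq.mpr (by simpa [mul_assoc] using hH.conj_mem' h hh y)
    rw [smul_apply_eq_smul_apply_inv_smul, hq, smul_eq_mul]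
  have : transfer ϕ h = ∏ q, ϕ ⟨(t q)⁻¹ * h * t q, hH.conj_mem' h hh (t q)⟩ := by
    rw [transfer_def ϕ T h, diff]
    exact Finset.prod_congr rfl fun q _ =>
      congrArg ϕ (Subtype.ext (by simp only [ht, mul_assoc]; rfl))
  rw [this, ← List.prod_map_comp_eq_prod_univ _ _ hnodup hcover]
  refine congrArg List.prod (List.map_congr_left fun x _ => ?_)
  exact map_conj_eq_of_mk_eq ϕ hh (T.2.quotientGroupMk_leftQuotientEquiv _)

theorem eq_one_of_finite_abelianization [Finite (Abelianization G)] [IsMulTorsionFree A]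
    (f : G →* A) : f = 1 := by
  ext g
  have hfin : IsOfFinOrder (Abelianization.lift f (Abelianization.of g)) :=
    (Abelianization.lift f).isOfFinOrder (isOfFinOrder_of_finite _)
  rw [Abelianization.lift_apply_of] at hfin
  by_contra hne
  exact not_isOfFinOrder_of_isMulTorsionFree hne hfin

end MonoidHom

theorem List.prod_map_flatMap_replicate {α M : Type*} [Monoid M] (f : α → M) (k : ℕ)
    (xs : List α) :
    ((xs.flatMap (List.replicate k)).map f).prod = (xs.map (f · ^ k)).prod := by
  induction xs with
  | nil => simp
  | cons x xs ih => simp [ih]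

theorem positive_generalized_identity_general {G : Type*} [Group G]
    (A : Subgroup G) [A.Normal]
    (hab : ∀ a b : G, a ∈ A → b ∈ A → a * b = b * a)
    (htf : ∀ a : G, a ∈ A → IsOfFinOrder a → a = 1)
    (habfin : Finite (Abelianization G))
    (k : ℕ) (hk : Monoid.exponent (G ⧸ A) = k)
    (xs : List G) (hnodup : (xs.map (QuotientGroup.mk (s := A))).Nodup)
    (hcover : ∀ q : G ⧸ A, q ∈ xs.map (QuotientGroup.mk (s := A))) :
    (∀ g : G, (xs.map (fun x => x⁻¹ * g ^ k * x)).prod = 1) ∧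
      ∃ ys : List G, ys.length = k * xs.length ∧
        ∀ g : G, (ys.map (fun y => y⁻¹ * g * y)).prod = 1 := by
  have : IsMulCommutative A := ⟨⟨fun a b => Subtype.ext (hab a b a.2 b.2)⟩⟩
  open IsMulCommutative in
  have : IsMulTorsionFree A := isMulTorsionFree_iff_not_isOfFinOrder.mpr fun a ha hfin =>
    ha (Subtype.ext (htf a a.2 (Submonoid.isOfFinOrder_coe.mpr hfin)))
  have : Finite (G ⧸ A) :=
    Set.finite_univ_iff.mp ((List.finite_toSet _).subset fun q _ => hcover q)
  have := Subgroup.finiteIndex_of_finite_quotient (H := A)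
  have hpow (g : G) : g ^ k ∈ A := by
    rw [← QuotientGroup.eq_one_iff, QuotientGroup.mk_pow, ← hk, Monoid.pow_exponent_eq_one]
  have hnorm (g : G) : (xs.map (fun x => x⁻¹ * g ^ k * x)).prod = 1 := by
    open IsMulCommutative in
    have := (MonoidHom.id A).transfer_eq_list_prod_conj hnodup hcover (hpow g)
    rw [MonoidHom.eq_one_of_finite_abelianization (MonoidHom.transfer (MonoidHom.id A))] at this
    simpa [Submonoid.coe_list_prod, Function.comp_def] using congrArg Subtype.val this.symm
  refine ⟨hnorm, xs.flatMap (List.replicate k), by simp [List.length_flatMap, mul_comm],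
    fun g => ?_⟩
  have hconj (x : G) : (x⁻¹ * g * x) ^ k = x⁻¹ * g ^ k * x := by
    simpa using conj_pow (a := x⁻¹) (b := g) (i := k)
  simpa only [List.prod_map_flatMap_replicate, hconj] using hnorm g

theorem positive_generalized_identity {G : Type*} [Group G]
    (A : Subgroup G) [A.Normal]
    (hab : ∀ a b : G, a ∈ A → b ∈ A → a * b = b * a)
    (htf : ∀ a : G, a ∈ A → IsOfFinOrder a → a = 1)
    (habfin : Finite (Abelianization G))
    (k : ℕ) (hk : Monoid.exponent (G ⧸ A) = k) (hk0 : k ≠ 0)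
    (xs : List G) (hnodup : (xs.map (QuotientGroup.mk (s := A))).Nodup)
    (hcover : ∀ q : G ⧸ A, q ∈ xs.map (QuotientGroup.mk (s := A))) :
    (∀ g : G, (xs.map (fun x => x⁻¹ * g ^ k * x)).prod = 1) ∧
      ∃ ys : List G, ys.length = k * xs.length ∧
        ∀ g : G, (ys.map (fun y => y⁻¹ * g * y)).prod = 1 :=
  positive_generalized_identity_general A hab htf habfin k hk xs hnodup hcover
end

section
/- Let G be a finitely generated group with a free abelian normal subgroup A of finite index such that G^{ab} is finite. Then exp(G^{ab}) ≤ exp_•(G) ≤ |G/A|, where exp_•(G) is the generalized exponent of G. -/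
/-!
Every homomorphism from `G` to a torsion-free abelian group kills the finite group `G^{ab}`,
so the transfer `G → A ≅ ℤⁿ` is trivial. Computed along the orbits of `⟨g⟩` on `G ⧸ A`, the
transfer of `g` is a product of `|G/A|` conjugates of `g`, which is therefore `1`. Conversely,
conjugates of `g` all have the same image in `G^{ab}`, so a product of `e` of them equal to `1`
forces `e` to be a multiple of `exp(G^{ab})`.
-/

open MulAction Subgroup

section ConjugateProducts

variable {G : Type*} [Group G]

theorem map_list_prod_map_conj {C : Type*} [CommGroup C] (f : G →* C) (g : G) (xs : List G) :
    f (xs.map fun x => x⁻¹ * g * x).prod = f g ^ xs.length := by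
  induction xs with
  | nil => simp
  | cons x xs ih =>
    rw [List.map_cons, List.prod_cons, map_mul, ih, List.length_cons, pow_succ', map_mul,
      map_mul, map_inv, inv_mul_cancel_comm]

theorem exponent_abelianization_dvd {e : ℕ}
    (h : ∀ g : G, ∃ xs : List G, xs.length = e ∧ (xs.map fun x => x⁻¹ * g * x).prod = 1) :
    Monoid.exponent (Abelianization G) ∣ e := by
  refine Monoid.exponent_dvd_of_forall_pow_eq_one fun y => ?_
  induction y using QuotientGroup.induction_on with
  | H g =>
    change Abelianization.of g ^ e = 1
    obtain ⟨xs, hlen, hprod⟩ := h g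
    rw [← hlen, ← map_list_prod_map_conj Abelianization.of, hprod, map_one]

theorem MonoidHom.eq_one_of_finite_abelianization_s16 [Finite (Abelianization G)] {B : Type*}
    [CommGroup B] [IsMulTorsionFree B] (f : G →* B) : f = 1 := by
  ext g
  refine pow_left_injective (Nat.card_pos (α := Abelianization G)).ne' ?_
  simp only [one_apply, one_pow]
  rw [← Abelianization.lift_apply_of f, ← map_pow, pow_card_eq_one', map_one]

/-- Over each orbit of `⟨g⟩` on `G ⧸ H`, take as many copies of the conjugate of `g` by a
representative as the orbit has points. -/
theorem exists_list_conj_prod_eq_transfer {H : Subgroup G} [H.FiniteIndex] {B : Type*}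
    [CommGroup B] (ϕ : H →* B) (g : G) :
    ∃ xs : List G, xs.length = H.index ∧
      ∃ h : H, (h : G) = (xs.map fun x => x⁻¹ * g * x).prod ∧ ϕ h = ϕ.transfer g := by
  let Q := Quotient (orbitRel (zpowers g) (G ⧸ H))
  let _ : Fintype Q := Fintype.ofFinite Q
  let k (q : Q) : ℕ := Function.minimalPeriod (g • ·) q.out
  let c (q : Q) : H := ⟨q.out.out⁻¹ * g ^ k q * q.out.out,
    QuotientGroup.out_conj_pow_minimalPeriod_mem H g q.out⟩
  have hc (q : Q) : ((List.replicate (k q) q.out.out).map fun x => x⁻¹ * g * x).prod = c q := by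
    simpa only [List.map_replicate, List.prod_replicate, inv_inv] using conj_pow (a := q.out.out⁻¹)
  refine ⟨(Finset.univ : Finset Q).toList.flatMap fun q => List.replicate (k q) q.out.out,
    ?_, (Finset.univ.toList.map c).prod, ?_, ?_⟩
  · simp only [List.length_flatMap, List.length_replicate, Finset.sum_map_toList]
    exact (index_eq_sum_minimalPeriod H g).symm
  · rw [val_list_prod, List.map_flatMap, List.flatMap_def, List.prod_flatten]
    simp only [hc, List.map_map, Function.comp_def]
  · rw [map_list_prod, List.map_map, Finset.prod_map_toList,
      MonoidHom.transfer_eq_prod_quotient_orbitRel_zpowers_quot]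
    rfl

end ConjugateProducts

theorem genExponent_bounds_general {G : Type*} [Group G]
    (A : Subgroup G) (hfin : A.index ≠ 0)
    (hfree : ∃ n : ℕ, Nonempty (A ≃* Multiplicative (Fin n → ℤ)))
    (habfin : Finite (Abelianization G)) :
    -- lower bound: any generalized exponent of `G` is at least `exp(G^{ab})`
    (∀ e : ℕ, 0 < e →
      (∀ g : G, ∃ xs : List G, xs.length = e ∧
        (xs.map (fun x => x⁻¹ * g * x)).prod = 1) →
      Monoid.exponent (Abelianization G) ≤ e) ∧
    -- upper bound: `|G/A|` is a generalized exponent of `G`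
    (∀ g : G, ∃ xs : List G, xs.length = A.index ∧
      (xs.map (fun x => x⁻¹ * g * x)).prod = 1) := by
  refine ⟨fun e he hgen => Nat.le_of_dvd he (exponent_abelianization_dvd hgen), fun g => ?_⟩
  obtain ⟨n, ⟨ϕ⟩⟩ := hfree
  have : A.FiniteIndex := ⟨hfin⟩
  have htransfer : ϕ.toMonoidHom.transfer = 1 := MonoidHom.eq_one_of_finite_abelianization_s16 _
  obtain ⟨xs, hlen, a, ha, hϕa⟩ := exists_list_conj_prod_eq_transfer ϕ.toMonoidHom g
  rw [htransfer, MonoidHom.one_apply] at hϕa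
  refine ⟨xs, hlen, ?_⟩
  rw [← ha, ϕ.map_eq_one_iff.mp hϕa, OneMemClass.coe_one]

theorem genExponent_bounds {G : Type*} [Group G] [Group.FG G]
    (A : Subgroup G) [A.Normal] (hfin : A.index ≠ 0)
    (hfree : ∃ n : ℕ, Nonempty (A ≃* Multiplicative (Fin n → ℤ)))
    (habfin : Finite (Abelianization G)) :
    -- lower bound: any generalized exponent of `G` is at least `exp(G^{ab})`
    (∀ e : ℕ, 0 < e →
      (∀ g : G, ∃ xs : List G, xs.length = e ∧
        (xs.map (fun x => x⁻¹ * g * x)).prod = 1) →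
      Monoid.exponent (Abelianization G) ≤ e) ∧
    -- upper bound: `|G/A|` is a generalized exponent of `G`
    (∀ g : G, ∃ xs : List G, xs.length = A.index ∧
      (xs.map (fun x => x⁻¹ * g * x)).prod = 1) :=
  genExponent_bounds_general A hfin hfree habfin
end

section
/- Let Q be a finite group, G = ℤ ≀ Q = ℤQ ⋊ Q the wreath product. Then the set of generalized torsion elements of G equals Aug(ℤQ) ⋊ Q, where Aug(ℤQ) is the augmentation ideal (kernel of the augmentation map ε : ℤQ → ℤ). -/
/-- The action of `Q` on the base group `ℤQ ≅ (Q → Multiplicative ℤ)` of the wreath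
product `ℤ ≀ Q`, by permuting coordinates: `(q • f) x = f (q⁻¹ * x)`. -/
def wreathAction (Q : Type*) [Group Q] : Q →* MulAut (Q → Multiplicative ℤ) where
  toFun q := MulDistribMulAction.toMulAut Qᵈᵐᵃ (Q → Multiplicative ℤ) (DomMulAct.mk q⁻¹)
  map_one' := by
    show MulDistribMulAction.toMulAut Qᵈᵐᵃ (Q → Multiplicative ℤ) (DomMulAct.mk (1:Q)⁻¹) = 1
    rw [inv_one]
    have h : DomMulAct.mk (1 : Q) = 1 := rfl
    rw [h, map_one]
  map_mul' a b := by
    show MulDistribMulAction.toMulAut Qᵈᵐᵃ (Q → Multiplicative ℤ) (DomMulAct.mk ((a*b):Q)⁻¹) = _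
    have h : DomMulAct.mk ((a * b)⁻¹ : Q) = DomMulAct.mk (a⁻¹ : Q) * DomMulAct.mk (b⁻¹ : Q) := by
      rw [mul_inv_rev]; rfl
    rw [h, map_mul]

/-- The wreath product `ℤ ≀ Q = ℤQ ⋊ Q`, with base group `ℤQ ≅ (Q → Multiplicative ℤ)`
(as an additive group) for `Q` finite. -/
abbrev WreathZ (Q : Type*) [Group Q] := (Q → Multiplicative ℤ) ⋊[wreathAction Q] Q

lemma wreathAction_apply {Q : Type*} [Group Q] (q : Q) (f : Q → Multiplicative ℤ) (x : Q) :
    wreathAction Q q f x = f (q⁻¹ * x) := rfl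

/-- The augmentation homomorphism `ℤ ≀ Q → ℤ`. -/
def augHom (Q : Type*) [Group Q] [Fintype Q] : WreathZ Q →* Multiplicative ℤ where
  toFun g := ∏ q, g.left q
  map_one' := by simp
  map_mul' a b := by
    show ∏ q, (a * b).left q = _
    simp only [SemidirectProduct.mul_left, Pi.mul_apply]
    rw [Finset.prod_mul_distrib]
    congr 1
    exact Fintype.prod_equiv (Equiv.mulLeft a.right⁻¹) _ _ (fun q => rfl)

lemma augHom_apply {Q : Type*} [Group Q] [Fintype Q] (g : WreathZ Q) :
    augHom Q g = ∏ q, g.left q := rfl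

lemma isGenTorsion_of_prod_conj_pow {G : Type*} [Group G] (g : G) (l : List G)
    (hl : l ≠ []) (n : ℕ) (hn : n ≠ 0)
    (h : (l.map (fun x => (x⁻¹ * g * x) ^ n)).prod = 1) : IsGenTorsion g := by
  refine ⟨l.flatMap (fun x => List.replicate n x), ?_, ?_⟩
  · cases l with
    | nil => exact absurd rfl hl
    | cons a t =>
      simp only [List.flatMap_cons, ne_eq, List.append_eq_nil_iff]
      intro ⟨h1, _⟩
      exact hn (by simpa using congrArg List.length h1)
  · rw [← h]
    clear h hl
    induction l with
    | nil => simp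
    | cons a t ih =>
      simp only [List.flatMap_cons, List.map_append, List.prod_append, List.map_cons,
        List.prod_cons, ih, List.map_replicate, List.prod_replicate]

/-- An element of `ℤ ≀ Q` is generalized torsion iff its base component lies in the
augmentation ideal, i.e. `T_•(ℤ ≀ Q) = Aug(ℤQ) ⋊ Q`. -/
theorem genTorsion_wreath_eq_aug_semidirect (Q : Type*) [Group Q] [Fintype Q]
    (g : WreathZ Q) :
    IsGenTorsion g ↔ ∑ q : Q, (g.left q).toAdd = 0 := by
  constructor
  · rintro ⟨xs, hne, hprod⟩
    have h1 : augHom Q ((xs.map (fun x => x⁻¹ * g * x)).prod) = 1 := by rw [hprod]; simp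
    rw [map_list_prod] at h1
    have h2 : (xs.map (fun x => x⁻¹ * g * x)).map (augHom Q)
        = List.replicate xs.length (augHom Q g) := by
      rw [List.map_map]
      rw [List.eq_replicate_iff]
      constructor
      · simp
      · intro b hb
        simp only [List.mem_map, Function.comp] at hb
        obtain ⟨x, _, rfl⟩ := hb
        simp only [map_mul, map_inv]
        rw [mul_comm, ← mul_assoc, mul_inv_cancel, one_mul]
    rw [h2, List.prod_replicate] at h1
    have hlen : xs.length ≠ 0 := by simpa using hne
    have := congrArg Multiplicative.toAdd h1
    rw [toAdd_pow] at this
    rw [toAdd_one, nsmul_eq_mul] at this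
    have haug : (augHom Q g).toAdd = 0 := by
      rcases mul_eq_zero.mp this with h | h
      · exact absurd (by exact_mod_cast h) hlen
      · exact h
    rw [augHom_apply, toAdd_prod] at haug
    exact haug
  · intro h
    -- g has augmentation 0
    have haug : augHom Q g = 1 := by
      apply Multiplicative.toAdd.injective
      rw [augHom_apply, toAdd_prod, toAdd_one]
      exact h
    set n := Fintype.card Q with hn
    have hn0 : n ≠ 0 := Fintype.card_ne_zero
    -- g^n has trivial Q-component
    have hr : (g ^ n).right = 1 := by
      have : (g ^ n).right = g.right ^ n := by
        induction n with
        | zero => simp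
        | succ k ih => rw [pow_succ, pow_succ, SemidirectProduct.mul_right, ih]
      rw [this, hn, pow_card_eq_one]
    set F : Q → Multiplicative ℤ := (g ^ n).left with hF
    have hgn : g ^ n = SemidirectProduct.inl F := by
      ext <;> simp [hF, hr]
    have hFaug : ∑ s : Q, (F s).toAdd = 0 := by
      have : augHom Q (g ^ n) = 1 := by rw [map_pow, haug, one_pow]
      rw [augHom_apply, ← hF] at this
      have := congrArg Multiplicative.toAdd this
      rw [toAdd_prod] at this
      exact this
    refine isGenTorsion_of_prod_conj_pow g
      ((Finset.univ.toList (α := Q)).map (fun p => SemidirectProduct.inr p)) ?_ n hn0 ?_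
    · simp [Finset.toList_eq_nil]
      exact Finset.univ_nonempty.ne_empty
    · rw [List.map_map]
      have key : ∀ p : Q, ((SemidirectProduct.inr p : WreathZ Q)⁻¹ * g * SemidirectProduct.inr p) ^ n
          = SemidirectProduct.inl (wreathAction Q p⁻¹ F) := by
        intro p
        have e1 : (SemidirectProduct.inr p : WreathZ Q)⁻¹ * g * SemidirectProduct.inr p
            = (SemidirectProduct.inr p : WreathZ Q)⁻¹ * g
              * ((SemidirectProduct.inr p : WreathZ Q)⁻¹)⁻¹ := by rw [inv_inv]
        rw [e1, conj_pow, inv_inv, hgn,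
          show ((SemidirectProduct.inr p : WreathZ Q))⁻¹
            = SemidirectProduct.inr p⁻¹ from (map_inv _ p).symm,
          ← SemidirectProduct.inl_aut_inv]
        congr 1
      have : (fun x => (x⁻¹ * g * x) ^ n) ∘ (fun p : Q => (SemidirectProduct.inr p : WreathZ Q))
          = (fun p : Q => SemidirectProduct.inl (wreathAction Q p⁻¹ F)) := by
        funext p; exact key p
      rw [this]
      have : (fun p : Q => (SemidirectProduct.inl (wreathAction Q p⁻¹ F) : WreathZ Q))
          = (SemidirectProduct.inl (φ := wreathAction Q)) ∘ (fun p : Q => wreathAction Q p⁻¹ F) := rfl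
      rw [this, ← List.map_map, ← map_list_prod]
      rw [Finset.prod_map_toList]
      convert map_one (SemidirectProduct.inl (φ := wreathAction Q))
      funext r
      have : (∏ p : Q, wreathAction Q p⁻¹ F) r = ∏ p : Q, F (p * r) := by
        rw [Finset.prod_apply]
        exact Finset.prod_congr rfl (fun p _ => by rw [wreathAction_apply, inv_inv])
      rw [Pi.one_apply, this]
      have := Fintype.prod_equiv (Equiv.mulRight r) (fun p : Q => F (p * r)) F (fun p => rfl)
      rw [this]
      have := congrArg Multiplicative.ofAdd hFaug
      rw [ofAdd_sum] at this
      simpa using this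
end

section
/- Let G be a group with central subgroup N ≅ ℤ such that G/N has exponent n and G is torsion-free. If α is a nontrivial generalized torsion element of G, then αⁿ is not a generalized torsion element of G. In particular, the set of generalized torsion elements of such a group need not be closed under taking powers. -/
theorem IsGenTorsion.isOfFinOrder_of_mem_center_s19 {G : Type*} [Group G] {g : G}
    (hg : g ∈ Subgroup.center G) (h : IsGenTorsion g) : IsOfFinOrder g := by
  obtain ⟨xs, hne, hprod⟩ := h
  have hconj : (fun x => x⁻¹ * g * x) = fun _ => g := by
    funext x
    rw [mul_assoc, ← Subgroup.mem_center_iff.mp hg x, inv_mul_cancel_left]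
  rw [hconj, List.map_const', List.prod_replicate] at hprod
  exact isOfFinOrder_iff_pow_eq_one.mpr ⟨xs.length, List.length_pos_iff.mpr hne, hprod⟩

theorem pow_not_genTorsion_adyan_general {G : Type*} [Group G]
    (N : Subgroup G) (hNc : N ≤ Subgroup.center G)
    (n : ℕ) (hn : 0 < n) (hexp : ∀ g : G, g ^ n ∈ N)
    (htf : ∀ g : G, IsOfFinOrder g → g = 1)
    (α : G) (hα1 : α ≠ 1) :
    ¬ IsGenTorsion (α ^ n) := by
  intro h
  have hαn : IsOfFinOrder (α ^ n) := h.isOfFinOrder_of_mem_center_s19 (hNc (hexp α))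
  exact hα1 (htf α (hαn.of_pow hn.ne'))

theorem pow_not_genTorsion_adyan {G : Type*} [Group G]
    (N : Subgroup G) (hNc : N ≤ Subgroup.center G)
    (hNiso : Nonempty (N ≃* Multiplicative ℤ))
    (n : ℕ) (hn : 0 < n) (hexp : ∀ g : G, g ^ n ∈ N)
    (htf : ∀ g : G, IsOfFinOrder g → g = 1)
    (α : G) (hα1 : α ≠ 1) (hα : IsGenTorsion α) :
    ¬ IsGenTorsion (α ^ n) :=
  pow_not_genTorsion_adyan_general N hNc n hn hexp htf α hα1
end
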